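/- Let λ = e^{2πiω}, ω irrational with convergent denominators (q_j), let (h̃_n) be as above with |f_2| ≥ 1, and let q'_0 < q'_1 < ⋯ enumerate the set U = {q_j : q_{j+1} ≥ (q_j+1)²} (assumed infinite). Set n_i = ⌊q'_{i+1}/(q'_i + 1)⌋. Then h̃_{q'_{i+1}} ≥ h̃_{q'_i}^{n_i} / |λ^{q'_{i+1}} − 1| for all i. -/

import Mathlib

open Finset


/-- The iterated fractional parts of the Gauss continued fraction algorithm:
`gaussIter ω n = ω_n`. -/
noncomputable def gaussIter (ω : ℝ) : ℕ → ℝ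
  | 0 => Int.fract ω
  | n + 1 => Int.fract (gaussIter ω n)⁻¹

/-- The partial quotients of the Gauss continued fraction algorithm:
`cfA ω 0 = a₀ = ⌊ω⌋`, `cfA ω (n+1) = a_{n+1} = ⌊1/ω_n⌋`. -/
noncomputable def cfA (ω : ℝ) : ℕ → ℤ
  | 0 => ⌊ω⌋
  | n + 1 => ⌊(gaussIter ω n)⁻¹⌋

/-- Denominators of the convergents: `q₋₂ = 1`, `q₋₁ = 0`, `q_n = a_n q_{n-1} + q_{n-2}`
(so `q₀ = 1`, `q₁ = a₁`). They are positive integers. -/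
noncomputable def qden (ω : ℝ) : ℕ → ℕ
  | 0 => 1
  | 1 => (cfA ω 1).toNat
  | n + 2 => (cfA ω (n + 2)).toNat * qden ω (n + 1) + qden ω n

/-- Numerators of the convergents: `p₋₂ = 0`, `p₋₁ = 1`, `p_n = a_n p_{n-1} + p_{n-2}`
(so `p₀ = a₀`, `p₁ = a₁ a₀ + 1`). -/
noncomputable def pnum (ω : ℝ) : ℕ → ℤ
  | 0 => cfA ω 0
  | 1 => cfA ω 1 * cfA ω 0 + 1
  | n + 2 => cfA ω (n + 2) * pnum ω (n + 1) + pnum ω n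

/-- The denominators viewed as real numbers. -/
noncomputable def qr (ω : ℝ) (n : ℕ) : ℝ := (qden ω n : ℝ)


open Finset

/-- The recurrence defining the modified majorant sequence `h̃`:
`h̃₀ = 1`, `h̃_n = (1/|λ^n-1|) ∑_{m=2}^{n+1} |f_m| ∑_{n₁+⋯+n_m=n+1-m, nᵢ≥0} h̃_{n₁}⋯h̃_{n_m}`. -/
def HtildeRec (lam : ℂ) (f : ℕ → ℂ) (h : ℕ → ℝ) : Prop :=
  h 0 = 1 ∧ ∀ n : ℕ, 1 ≤ n →
    h n = (1 / ‖lam ^ n - 1‖) * ∑ m ∈ Finset.Icc 2 (n + 1),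
      ‖f m‖ * ∑ t ∈ Finset.Nat.antidiagonalTuple m (n + 1 - m), ∏ i, h (t i)

/-!
Write `s = q'ᵢ + 1` and `N = q'ᵢ₊₁ ≥ s²`, so `nᵢ = ⌊N / s⌋ ≥ 2`. Since `|λⁿ - 1| ≤ 2`, keeping
only the pairs `(a, b)`, `(b, a)` of the `m = 2` term of the recurrence gives
`h̃_a h̃_b ≤ h̃_{a+b+1}` for `a ≠ b`. With `b = 0` this makes `h̃` monotone from index `1`, and
iterating with `b = s - 1` gives `h̃_{ks-1} ≥ h̃_{s-1}ᵏ / 2`. Hence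
`h̃_N ≥ 2 h̃_{N-1} / |λᴺ - 1| ≥ 2 h̃_{nᵢ s - 1} / |λᴺ - 1| ≥ h̃_{q'ᵢ}^{nᵢ} / |λᴺ - 1|`.
-/

lemma irrational_gaussIter {ω : ℝ} (hω : Irrational ω) : ∀ n, Irrational (gaussIter ω n)
  | 0 => by simpa [gaussIter, ← Int.self_sub_floor] using hω.sub_intCast ⌊ω⌋
  | n + 1 => by
    simpa [gaussIter, ← Int.self_sub_floor] using
      (irrational_gaussIter hω n).inv.sub_intCast ⌊(gaussIter ω n)⁻¹⌋

lemma gaussIter_mem_Ioo {ω : ℝ} (hω : Irrational ω) (n : ℕ) : gaussIter ω n ∈ Set.Ioo 0 1 := by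
  have hne : gaussIter ω n ≠ 0 := by
    simpa using (irrational_gaussIter hω n).ne_int 0
  have hIco : gaussIter ω n ∈ Set.Ico 0 1 := by
    cases n <;> exact ⟨Int.fract_nonneg _, Int.fract_lt_one _⟩
  exact ⟨lt_of_le_of_ne hIco.1 hne.symm, hIco.2⟩

lemma one_le_cfA_succ {ω : ℝ} (hω : Irrational ω) (n : ℕ) : 1 ≤ cfA ω (n + 1) := by
  obtain ⟨h0, h1⟩ := gaussIter_mem_Ioo hω n
  have : (1 : ℝ) ≤ (gaussIter ω n)⁻¹ := one_le_inv₀ h0 |>.mpr h1.le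
  exact Int.le_floor.2 (by exact_mod_cast this)

lemma qden_pos {ω : ℝ} (hω : Irrational ω) : ∀ n, 0 < qden ω n
  | 0 => Nat.one_pos
  | 1 => by have : 1 ≤ cfA ω 1 := one_le_cfA_succ hω 0; simp only [qden]; omega
  | n + 2 => by have := qden_pos hω n; simp only [qden]; omega

lemma qden_mono {ω : ℝ} (hω : Irrational ω) : Monotone (qden ω) := by
  refine monotone_nat_of_le_succ fun n => ?_
  rcases n with _ | n
  · exact qden_pos hω 1
  · have ha : 1 ≤ cfA ω (n + 2) := one_le_cfA_succ hω (n + 1)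
    have ha' : 1 ≤ (cfA ω (n + 2)).toNat := by omega
    show qden ω (n + 1) ≤ (cfA ω (n + 2)).toNat * qden ω (n + 1) + qden ω n
    nlinarith

lemma norm_exp_two_pi_I_mul (ω : ℝ) : ‖Complex.exp (2 * Real.pi * Complex.I * ω)‖ = 1 := by
  rw [show (2 * Real.pi * Complex.I * ω : ℂ) = ((2 * Real.pi * ω : ℝ) : ℂ) * Complex.I by
    push_cast; ring]
  exact Complex.norm_exp_ofReal_mul_I _

lemma exp_two_pi_I_mul_pow_ne_one {ω : ℝ} (hω : Irrational ω) {n : ℕ} (hn : n ≠ 0) :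
    Complex.exp (2 * Real.pi * Complex.I * ω) ^ n ≠ 1 := by
  rw [Ne, ← Complex.exp_nat_mul, Complex.exp_eq_one_iff]
  rintro ⟨m, hm⟩
  have hπ : (2 * Real.pi * Complex.I : ℂ) ≠ 0 := by simp [Real.pi_ne_zero]
  have hcancel : ((n * ω : ℝ) : ℂ) = (m : ℝ) := by
    push_cast; exact mul_right_cancel₀ hπ (by linear_combination hm)
  exact (hω.natCast_mul hn).ne_int m (by exact_mod_cast hcancel)

lemma norm_pow_sub_one_le_two {lam : ℂ} (hlam : ‖lam‖ = 1) (n : ℕ) : ‖lam ^ n - 1‖ ≤ 2 :=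
  calc ‖lam ^ n - 1‖ ≤ ‖lam ^ n‖ + ‖(1 : ℂ)‖ := norm_sub_le _ _
    _ = 2 := by rw [norm_pow, hlam]; norm_num

lemma div_two_le_div_norm_pow_sub_one {lam : ℂ} (hlam1 : ‖lam‖ = 1) {n : ℕ}
    (hn : lam ^ n ≠ 1) {x : ℝ} (hx : 0 ≤ x) : x / 2 ≤ x / ‖lam ^ n - 1‖ :=
  div_le_div_of_nonneg_left hx (norm_pos_iff.mpr (sub_ne_zero.mpr hn))
    (norm_pow_sub_one_le_two hlam1 n)

namespace HtildeRec

variable {lam : ℂ} {f : ℕ → ℂ} {h : ℕ → ℝ}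

lemma nonneg (hrec : HtildeRec lam f h) : ∀ n, 0 ≤ h n := by
  intro n
  induction n using Nat.strong_induction_on with
  | _ n ih =>
    rcases Nat.eq_zero_or_pos n with rfl | hn
    · rw [hrec.1]; exact zero_le_one
    rw [hrec.2 n hn]
    refine mul_nonneg (by positivity) (sum_nonneg fun m hm => mul_nonneg (norm_nonneg _)
      (sum_nonneg fun t ht => prod_nonneg fun i _ => ih _ ?_))
    have hti : t i ≤ n + 1 - m :=
      Nat.mem_antidiagonalTuple.mp ht ▸ single_le_sum (fun k _ => Nat.zero_le (t k)) (mem_univ i)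
    have hm2 : 2 ≤ m := (mem_Icc.mp hm).1
    omega

lemma sum_pairs_div_le (hrec : HtildeRec lam f h) (hf2 : 1 ≤ ‖f 2‖) {n : ℕ} (hn : 1 ≤ n)
    (s : Finset (Fin 2 → ℕ)) (hs : s ⊆ Nat.antidiagonalTuple 2 (n - 1)) :
    (∑ t ∈ s, h (t 0) * h (t 1)) / ‖lam ^ n - 1‖ ≤ h n := by
  have hnn := hrec.nonneg
  set S := fun m => ∑ t ∈ Nat.antidiagonalTuple m (n + 1 - m), ∏ i, h (t i)
  have hS : ∀ m, 0 ≤ S m := fun m => sum_nonneg fun t _ => prod_nonneg fun i _ => hnn _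
  calc (∑ t ∈ s, h (t 0) * h (t 1)) / ‖lam ^ n - 1‖
      = (1 / ‖lam ^ n - 1‖) * ∑ t ∈ s, ∏ i, h (t i) := by
        simp only [Fin.prod_univ_two]; ring
    _ ≤ (1 / ‖lam ^ n - 1‖) * (‖f 2‖ * S 2) := by
        gcongr
        calc ∑ t ∈ s, ∏ i, h (t i) ≤ S 2 :=
              sum_le_sum_of_subset_of_nonneg (by simpa [show n + 1 - 2 = n - 1 by omega])
                fun t _ _ => prod_nonneg fun i _ => hnn _
          _ ≤ ‖f 2‖ * S 2 := le_mul_of_one_le_left (hS 2) hf2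
    _ ≤ (1 / ‖lam ^ n - 1‖) * ∑ m ∈ Icc 2 (n + 1), ‖f m‖ * S m := by
        gcongr
        exact single_le_sum (f := fun m => ‖f m‖ * S m)
          (fun m _ => mul_nonneg (norm_nonneg _) (hS m)) (mem_Icc.mpr ⟨le_rfl, by omega⟩)
    _ = h n := (hrec.2 n hn).symm

lemma pair_mem_antidiagonalTuple {a b n : ℕ} (hab : a + b = n) :
    ![a, b] ∈ Nat.antidiagonalTuple 2 n := by
  simpa [Nat.mem_antidiagonalTuple, Fin.sum_univ_two] using hab

lemma mul_div_le (hrec : HtildeRec lam f h) (hf2 : 1 ≤ ‖f 2‖) {a b : ℕ} :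
    h a * h b / ‖lam ^ (a + b + 1) - 1‖ ≤ h (a + b + 1) := by
  simpa using hrec.sum_pairs_div_le hf2 (n := a + b + 1) (by omega) {![a, b]}
    (by simpa using pair_mem_antidiagonalTuple rfl)

lemma two_mul_mul_div_le (hrec : HtildeRec lam f h) (hf2 : 1 ≤ ‖f 2‖) {a b : ℕ} (hab : a ≠ b) :
    2 * (h a * h b) / ‖lam ^ (a + b + 1) - 1‖ ≤ h (a + b + 1) := by
  have hne : ![a, b] ≠ ![b, a] := fun hEq => hab (by simpa using congrFun hEq 0)
  have := hrec.sum_pairs_div_le hf2 (n := a + b + 1) (by omega) {![a, b], ![b, a]} <| by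
    simp only [insert_subset_iff, singleton_subset_iff]
    exact ⟨pair_mem_antidiagonalTuple rfl, pair_mem_antidiagonalTuple (by omega)⟩
  rw [sum_pair hne] at this
  simpa [two_mul, mul_comm (h b)] using this

variable (hlam1 : ‖lam‖ = 1) (hlam : ∀ n, n ≠ 0 → lam ^ n ≠ 1)
include hlam1 hlam

-- Since `‖λⁿ - 1‖ ≤ 2`, the two pairs `(a, b)` and `(b, a)` already beat the divisor.
lemma mul_le (hrec : HtildeRec lam f h) (hf2 : 1 ≤ ‖f 2‖) {a b : ℕ} (hab : a ≠ b) :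
    h a * h b ≤ h (a + b + 1) := by
  calc h a * h b = 2 * (h a * h b) / 2 := by ring
    _ ≤ 2 * (h a * h b) / ‖lam ^ (a + b + 1) - 1‖ :=
        div_two_le_div_norm_pow_sub_one hlam1 (hlam _ (by omega))
          (mul_nonneg zero_le_two (mul_nonneg (hrec.nonneg a) (hrec.nonneg b)))
    _ ≤ h (a + b + 1) := hrec.two_mul_mul_div_le hf2 hab

lemma monotoneOn (hrec : HtildeRec lam f h) (hf2 : 1 ≤ ‖f 2‖) : MonotoneOn h (Set.Ici 1) :=
  monotoneOn_nat_Ici_of_le_succ fun n hn => by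
    simpa [hrec.1] using hrec.mul_le hlam1 hlam hf2 (a := n) (b := 0) (by omega)

lemma pow_div_two_le (hrec : HtildeRec lam f h) (hf2 : 1 ≤ ‖f 2‖) (m : ℕ) :
    ∀ k, h m ^ (k + 1) / 2 ≤ h (k * (m + 1) + m)
  | 0 => by simpa using div_le_self (hrec.nonneg m) one_le_two
  | 1 => by
    calc h m ^ 2 / 2 = h m * h m / 2 := by ring
      _ ≤ h m * h m / ‖lam ^ (m + m + 1) - 1‖ :=
          div_two_le_div_norm_pow_sub_one hlam1 (hlam _ (by omega))
            (mul_nonneg (hrec.nonneg m) (hrec.nonneg m))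
      _ ≤ h (m + m + 1) := hrec.mul_div_le hf2
      _ = h (1 * (m + 1) + m) := by ring_nf
  | k + 2 =>
    calc h m ^ (k + 3) / 2 = h m ^ (k + 2) / 2 * h m := by ring
      _ ≤ h ((k + 1) * (m + 1) + m) * h m := by
          gcongr
          · exact hrec.nonneg m
          · exact hrec.pow_div_two_le hf2 m (k + 1)
      _ ≤ h ((k + 1) * (m + 1) + m + m + 1) := hrec.mul_le hlam1 hlam hf2 (by nlinarith)
      _ = h ((k + 2) * (m + 1) + m) := by ring_nf

end HtildeRec

theorem stmt15_general (ω : ℝ) (hω : Irrational ω) (lam : ℂ)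
    (hlam : lam = Complex.exp (2 * Real.pi * Complex.I * ω))
    (f : ℕ → ℂ) (hf2 : 1 ≤ ‖f 2‖)
    (h : ℕ → ℝ) (hrec : HtildeRec lam f h)
    (j : ℕ → ℕ) (hjmono : StrictMono j)
    (hjU : ∀ i : ℕ, (qden ω (j i) + 1) ^ 2 ≤ qden ω (j i + 1)) :
    ∀ i : ℕ,
      h (qden ω (j i)) ^ (qden ω (j (i + 1)) / (qden ω (j i) + 1)) /
          ‖lam ^ (qden ω (j (i + 1))) - 1‖ ≤
        h (qden ω (j (i + 1))) := by
  intro i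
  have hlam1 : ‖lam‖ = 1 := hlam ▸ norm_exp_two_pi_I_mul ω
  have hroot : ∀ n, n ≠ 0 → lam ^ n ≠ 1 := fun n hn => hlam ▸ exp_two_pi_I_mul_pow_ne_one hω hn
  set q := qden ω (j i)
  set N := qden ω (j (i + 1))
  have hq : 1 ≤ q := qden_pos hω _
  have hN : (q + 1) ^ 2 ≤ N := (hjU i).trans (qden_mono hω (hjmono i.lt_succ_self))
  obtain ⟨k, hk⟩ : ∃ k, N / (q + 1) = k + 1 := Nat.exists_eq_add_one.mpr <|
    (Nat.le_div_iff_mul_le (by omega)).mpr (by nlinarith)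
  have hkN : (k + 1) * (q + 1) ≤ N := hk ▸ Nat.div_mul_le_self N (q + 1)
  obtain ⟨M, hM⟩ : ∃ M, N = M + 0 + 1 :=
    ⟨N - 1, by have := (Nat.one_le_pow 2 _ (by omega)).trans hN; omega⟩
  have hpow : h q ^ (k + 1) ≤ 2 * (h M * h 0) := by
    rw [hrec.1, mul_one, ← div_le_iff₀' zero_lt_two]
    refine (hrec.pow_div_two_le hlam1 hroot hf2 q k).trans ?_
    exact hrec.monotoneOn hlam1 hroot hf2 (Set.mem_Ici.mpr (by nlinarith))
      (Set.mem_Ici.mpr (by nlinarith)) (by nlinarith)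
  rw [hk, hM]
  exact (div_le_div_of_nonneg_right hpow (norm_nonneg _)).trans
    (hrec.two_mul_mul_div_le hf2 (by nlinarith))

/-- with `q'_i = q_{j(i)}` enumerating (in increasing order) the set
`U = {q_j : q_{j+1} ≥ (q_j+1)²}` and `n_i = ⌊q'_{i+1}/(q'_i+1)⌋`, one has
`h̃_{q'_{i+1}} ≥ h̃_{q'_i}^{n_i} / |λ^{q'_{i+1}} - 1|`. -/
theorem stmt15 (ω : ℝ) (hω : Irrational ω) (lam : ℂ)
    (hlam : lam = Complex.exp (2 * Real.pi * Complex.I * ω))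
    (f : ℕ → ℂ) (hf2 : 1 ≤ ‖f 2‖)
    (h : ℕ → ℝ) (hrec : HtildeRec lam f h)
    (j : ℕ → ℕ) (hjmono : StrictMono j)
    (hjU : ∀ i : ℕ, (qden ω (j i) + 1) ^ 2 ≤ qden ω (j i + 1))
    (hjall : ∀ l : ℕ, (qden ω l + 1) ^ 2 ≤ qden ω (l + 1) → ∃ i, j i = l) :
    ∀ i : ℕ,
      h (qden ω (j i)) ^ (qden ω (j (i + 1)) / (qden ω (j i) + 1)) /
          ‖lam ^ (qden ω (j (i + 1))) - 1‖ ≤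
        h (qden ω (j (i + 1))) :=
  stmt15_general ω hω lam hlam f hf2 h hrec j hjmono hjU
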